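/- arXiv:2404.05510 — 2 statements merged into one kernel-verified Lean document; each statement's English description precedes it below -/
import Mathlib

section
/- Let Q > 2, R > 0, and let z₀ be the first positive zero of the Bessel function J₀. Then f(ρ) = ρ^{−(Q−2)/2} J₀(ρ z₀/R) is positive on (0,R) and solves (ρ^{Q−1} f')' + ρ^{Q−1} ((Q−2)²/(4ρ²) + z₀²/R²) f = 0 on (0,R); i.e., (1, (Q−2)²/(4ρ²) + z₀²/R²) is a Q-dimensional Bessel pair on (0,R). -/
/-!
Write `f = ρ ^ (-(Q - 2) / 2) * y`. The Hardy potential `(Q - 2) ^ 2 / (4 ρ ^ 2)` exactly cancels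
the terms produced by the power, so the `Q`-dimensional equation for `f` becomes
`ρ ^ (Q / 2) * (y'' + y' / ρ + (z₀ / R) ^ 2 * y) = 0`, which holds for `y(ρ) = J₀(z₀ ρ / R)` by
rescaling Bessel's equation. Positivity of `f` on `(0, R)` is positivity of `J₀` on `(0, z₀)`.
-/

open Real Filter Topology

theorem bessel_ode_comp_const_mul {J : ℝ → ℝ}
    (hODE : ∀ s : ℝ, s ≠ 0 → deriv (deriv J) s + (1 / s) * deriv J s + J s = 0)
    {k r : ℝ} (hk : k ≠ 0) (hr : r ≠ 0) :
    deriv (deriv fun s => J (k * s)) r + (1 / r) * deriv (fun s => J (k * s)) r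
      + k ^ 2 * J (k * r) = 0 := by
  have hderiv : (deriv fun s => J (k * s)) = fun s => k * deriv J (k * s) := by
    ext s
    rw [deriv_comp_mul_left, smul_eq_mul]
  rw [hderiv, deriv_const_mul_field, deriv_comp_mul_left, smul_eq_mul]
  calc k * (k * deriv (deriv J) (k * r)) + 1 / r * (k * deriv J (k * r)) + k ^ 2 * J (k * r)
      = k ^ 2 * (deriv (deriv J) (k * r) + 1 / (k * r) * deriv J (k * r) + J (k * r)) := by
        field_simp
    _ = 0 := by rw [hODE (k * r) (mul_ne_zero hk hr), mul_zero]

theorem radial_hardy_op_rpow_mul (Q c : ℝ) {y : ℝ → ℝ} {ρ : ℝ} (hρ : 0 < ρ)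
    (hy : ∀ᶠ r in 𝓝 ρ, DifferentiableAt ℝ y r) (hy' : DifferentiableAt ℝ (deriv y) ρ) :
    deriv (fun r => r ^ (Q - 1) * deriv (fun s => s ^ (-(Q - 2) / 2) * y s) r) ρ
        + ρ ^ (Q - 1) * ((Q - 2) ^ 2 / (4 * ρ ^ 2) + c) * (ρ ^ (-(Q - 2) / 2) * y ρ)
      = ρ ^ (Q / 2) * (deriv (deriv y) ρ + (1 / ρ) * deriv y ρ + c * y ρ) := by
  have hrpow {r : ℝ} (hr : 0 < r) (p : ℝ) : HasDerivAt (fun r : ℝ => r ^ p) (p * r ^ (p - 1)) r :=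
    hasDerivAt_rpow_const (Or.inl hr.ne')
  set a := -(Q - 2) / 2
  have hf' : (fun r => r ^ (Q - 1) * deriv (fun s => s ^ a * y s) r) =ᶠ[𝓝 ρ]
      fun r => r ^ (Q - 1) * (a * r ^ (a - 1) * y r + r ^ a * deriv y r) := by
    filter_upwards [Ioi_mem_nhds hρ, hy] with r hr hyr
    have hf : HasDerivAt (fun s => s ^ a * y s) (a * r ^ (a - 1) * y r + r ^ a * deriv y r) r :=
      (hrpow hr a).mul hyr.hasDerivAt
    rw [hf.deriv]
  have hg : HasDerivAt (fun r => r ^ (Q - 1) * (a * r ^ (a - 1) * y r + r ^ a * deriv y r))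
      ((Q - 1) * ρ ^ (Q - 1 - 1) * (a * ρ ^ (a - 1) * y ρ + ρ ^ a * deriv y ρ)
        + ρ ^ (Q - 1) * (a * ((a - 1) * ρ ^ (a - 1 - 1)) * y ρ + a * ρ ^ (a - 1) * deriv y ρ
          + (a * ρ ^ (a - 1) * deriv y ρ + ρ ^ a * deriv (deriv y) ρ))) ρ :=
    (hrpow hρ _).mul ((((hrpow hρ _).const_mul a).mul hy.self_of_nhds.hasDerivAt).add
      ((hrpow hρ a).mul hy'.hasDerivAt))
  rw [hf'.deriv_eq, hg.deriv]
  -- every power of `ρ` that occurs is `u ^ m * ρ ^ n` for integers `m`, `n`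
  set u := ρ ^ (Q / 2) with hu
  have hsq : ρ ^ Q = u ^ 2 := by rw [hu, ← rpow_mul_natCast hρ.le]; norm_num
  have e1 : ρ ^ (Q - 1) = u ^ 2 / ρ := by rw [rpow_sub_one hρ.ne', hsq]
  have e2 : ρ ^ (Q - 1 - 1) = u ^ 2 / ρ ^ 2 := by rw [rpow_sub_one hρ.ne', e1]; ring
  have e3 : ρ ^ (a - 1) = 1 / u := by rw [show a - 1 = -(Q / 2) by ring, rpow_neg hρ.le, one_div]
  have e4 : ρ ^ (a - 1 - 1) = 1 / (u * ρ) := by rw [rpow_sub_one hρ.ne', e3]; ring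
  have e5 : ρ ^ a = ρ / u := by
    rw [show a = (a - 1) + 1 by ring, rpow_add_one hρ.ne', e3]; ring
  rw [e1, e2, e3, e4, e5]
  field_simp
  ring

theorem bessel_pair_brezis_vazquez_general (Q R : ℝ) (hR : 0 < R)
    (J₀ : ℝ → ℝ) (hJ : ContDiff ℝ 2 J₀)
    (hODE : ∀ s : ℝ, s ≠ 0 → deriv (deriv J₀) s + (1 / s) * deriv J₀ s + J₀ s = 0)
    (z₀ : ℝ) (hz₀ : 0 < z₀)
    (hfirst : ∀ s : ℝ, 0 ≤ s → s < z₀ → 0 < J₀ s) :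
    ∀ ρ ∈ Set.Ioo (0:ℝ) R,
      (0 < ρ ^ (-(Q - 2) / 2) * J₀ (ρ * z₀ / R) ∧
        deriv (fun r : ℝ =>
            r ^ (Q - 1) * deriv (fun s : ℝ => s ^ (-(Q - 2) / 2) * J₀ (s * z₀ / R)) r) ρ
          + ρ ^ (Q - 1) * ((Q - 2) ^ 2 / (4 * ρ ^ 2) + z₀ ^ 2 / R ^ 2)
            * (ρ ^ (-(Q - 2) / 2) * J₀ (ρ * z₀ / R)) = 0) := by
  rintro ρ ⟨hρ, hρR⟩
  simp only [show ∀ s, s * z₀ / R = z₀ / R * s from fun s => by ring, ← div_pow]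
  have hk : 0 < z₀ / R := div_pos hz₀ hR
  have hkρ : z₀ / R * ρ < z₀ := by
    rw [div_mul_eq_mul_div, div_lt_iff₀ hR]
    exact mul_lt_mul_of_pos_left hρR hz₀
  have hy : ContDiff ℝ 2 fun s => J₀ (z₀ / R * s) := hJ.comp (contDiff_const.mul contDiff_id)
  refine ⟨mul_pos (rpow_pos_of_pos hρ _) (hfirst _ (by positivity) hkρ), ?_⟩
  rw [radial_hardy_op_rpow_mul Q _ hρ (.of_forall (hy.differentiable two_ne_zero))
    (hy.differentiable_deriv_two _), bessel_ode_comp_const_mul hODE hk.ne' hρ.ne', mul_zero]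

/-- Brezis–Vázquez-type Bessel pair: if `J₀` is the Bessel function of the
first kind of order zero (a `C²` solution of `J₀'' + (1/s)J₀' + J₀ = 0` with
`J₀(0) = 1`) and `z₀` is its first positive zero, then for `Q > 2`, `R > 0`
the function `f(ρ) = ρ^{−(Q−2)/2} J₀(ρ z₀/R)` is positive on `(0,R)` and solves
`(ρ^{Q−1} f')' + ρ^{Q−1} ((Q−2)²/(4ρ²) + z₀²/R²) f = 0` on `(0,R)`; i.e.
`(1, (Q−2)²/(4ρ²) + z₀²/R²)` is a `Q`-dimensional Bessel pair on `(0,R)`. -/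
theorem bessel_pair_brezis_vazquez (Q R : ℝ) (hQ : 2 < Q) (hR : 0 < R)
    (J₀ : ℝ → ℝ) (hJ : ContDiff ℝ 2 J₀)
    (hODE : ∀ s : ℝ, s ≠ 0 → deriv (deriv J₀) s + (1 / s) * deriv J₀ s + J₀ s = 0)
    (hJ0 : J₀ 0 = 1)
    (z₀ : ℝ) (hz₀ : 0 < z₀) (hzero : J₀ z₀ = 0)
    (hfirst : ∀ s : ℝ, 0 ≤ s → s < z₀ → 0 < J₀ s) :
    ∀ ρ ∈ Set.Ioo (0:ℝ) R,
      (0 < ρ ^ (-(Q - 2) / 2) * J₀ (ρ * z₀ / R) ∧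
        deriv (fun r : ℝ =>
            r ^ (Q - 1) * deriv (fun s : ℝ => s ^ (-(Q - 2) / 2) * J₀ (s * z₀ / R)) r) ρ
          + ρ ^ (Q - 1) * ((Q - 2) ^ 2 / (4 * ρ ^ 2) + z₀ ^ 2 / R ^ 2)
            * (ρ ^ (-(Q - 2) / 2) * J₀ (ρ * z₀ / R)) = 0) :=
  bessel_pair_brezis_vazquez_general Q R hR J₀ hJ hODE z₀ hz₀ hfirst
end

section
/- One-dimensional radial Hardy identity with Bessel pair: let Q ≥ 1, 0 < R ≤ ∞, and let (V, W) be a Q-dimensional Bessel pair on (0,R) with positive C² solution f of (ρ^{Q−1}Vf')' + ρ^{Q−1}Wf = 0. Then for every d ∈ C_c^∞(0,R), ∫₀^R V(ρ) d'(ρ)² ρ^{Q−1} dρ − ∫₀^R W(ρ) d(ρ)² ρ^{Q−1} dρ = ∫₀^R V(ρ) f(ρ)² ((d/f)'(ρ))² ρ^{Q−1} dρ. -/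
open Real MeasureTheory Set ENNReal

/-- One-dimensional radial Hardy identity with a Bessel pair: if `(V, W)` is a
`Q`-dimensional Bessel pair on `(0,R)` (`0 < R ≤ ∞`) with positive `C²`
solution `f` of `(ρ^{Q−1}Vf')' + ρ^{Q−1}Wf = 0`, then for every
`d ∈ C_c^∞(0,R)`,
`∫ V d'² ρ^{Q−1} − ∫ W d² ρ^{Q−1} = ∫ V f² ((d/f)')² ρ^{Q−1}`. -/
theorem radial_hardy_identity_bessel_pair (Q : ℝ) (hQ : 1 ≤ Q)
    (R : ℝ≥0∞) (hR : 0 < R)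
    (S : Set ℝ) (hS : S = {r : ℝ | 0 < r ∧ ENNReal.ofReal r < R})
    (V W f : ℝ → ℝ)
    (hV : ContDiffOn ℝ 1 V S) (hW : ContDiffOn ℝ 1 W S)
    (hf : ContDiffOn ℝ 2 f S) (hfpos : ∀ r ∈ S, 0 < f r)
    (hODE : ∀ r ∈ S,
      deriv (fun s : ℝ => s ^ (Q - 1) * V s * deriv f s) r
        + r ^ (Q - 1) * W r * f r = 0)
    (d : ℝ → ℝ) (hd : ContDiff ℝ (⊤ : ℕ∞) d) (hdsupp : HasCompactSupport d)
    (hdsub : tsupport d ⊆ S) :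
    (∫ r in S, V r * (deriv d r) ^ 2 * r ^ (Q - 1))
      - ∫ r in S, W r * (d r) ^ 2 * r ^ (Q - 1)
      = ∫ r in S, V r * (f r) ^ 2 * (deriv (fun s : ℝ => d s / f s) r) ^ 2
          * r ^ (Q - 1) := by
  have hSopen : IsOpen S := by
    rw [hS]
    exact isOpen_Ioi.inter (isOpen_Iio.preimage ENNReal.continuous_ofReal)
  have hpos : ∀ r ∈ S, (0 : ℝ) < r := by
    intro r hr; rw [hS] at hr; exact hr.1
  set K : Set ℝ := tsupport d with hKdef
  have hK : IsCompact K := hdsupp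
  have hKS : K ⊆ S := hdsub
  have hKc : IsClosed K := isClosed_tsupport d
  -- global differentiability of d
  have hdD : ∀ x : ℝ, HasDerivAt d (deriv d x) x := fun x =>
    ((hd.differentiable (by simp)) x).hasDerivAt
  -- differentiability of f on S
  have hfD : ∀ r ∈ S, HasDerivAt f (deriv f r) r := by
    intro r hr
    exact ((hf.contDiffAt (hSopen.mem_nhds hr)).differentiableAt
      (by norm_num)).hasDerivAt
  have hf1 : ContDiffOn ℝ 1 (deriv f) S := hf.deriv_of_isOpen hSopen (by norm_num)
  -- derivative of d/f on S
  have hgS : ∀ r ∈ S, deriv (fun s : ℝ => d s / f s) r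
      = (deriv d r * f r - d r * deriv f r) / (f r) ^ 2 := fun r hr =>
    ((hdD r).div (hfD r hr) (hfpos r hr).ne').deriv
  -- vanishing outside K
  have hd0 : ∀ x ∉ K, d x = 0 := fun x hx => image_eq_zero_of_notMem_tsupport hx
  have hev0 : ∀ x ∉ K, ∀ᶠ y in nhds x, d y = 0 := by
    intro x hx
    filter_upwards [hKc.isOpen_compl.mem_nhds hx] with y hy
    exact hd0 y hy
  have hd0' : ∀ x ∉ K, deriv d x = 0 := by
    intro x hx
    have h1 : d =ᶠ[nhds x] fun _ => (0 : ℝ) := hev0 x hx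
    rw [h1.deriv_eq, deriv_const]
  have hg0 : ∀ x ∉ K, deriv (fun s : ℝ => d s / f s) x = 0 := by
    intro x hx
    have h1 : (fun s : ℝ => d s / f s) =ᶠ[nhds x] fun _ => (0 : ℝ) := by
      filter_upwards [hev0 x hx] with y hy
      simp [hy]
    rw [h1.deriv_eq, deriv_const]
  -- the auxiliary function u and its derivative
  set u : ℝ → ℝ := fun s => s ^ (Q - 1) * V s * deriv f s * d s ^ 2 / f s
    with hu_def
  have hu0 : ∀ x ∉ K, u x = 0 := by
    intro x hx
    simp [hu_def, hd0 x hx]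
  have key : ∀ r ∈ S, HasDerivAt u
      (V r * (deriv d r) ^ 2 * r ^ (Q - 1)
        - W r * (d r) ^ 2 * r ^ (Q - 1)
        - V r * (f r) ^ 2 * (deriv (fun s : ℝ => d s / f s) r) ^ 2
            * r ^ (Q - 1)) r := by
    intro r hr
    have hr0 : (0 : ℝ) < r := hpos r hr
    have hfr : (0 : ℝ) < f r := hfpos r hr
    have hVD : HasDerivAt V (deriv V r) r :=
      ((hV.contDiffAt (hSopen.mem_nhds hr)).differentiableAt (by norm_num)).hasDerivAt
    have hf'D : HasDerivAt (deriv f) (deriv (deriv f) r) r :=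
      ((hf1.contDiffAt (hSopen.mem_nhds hr)).differentiableAt (by norm_num)).hasDerivAt
    have hrpow : HasDerivAt (fun s : ℝ => s ^ (Q - 1))
        ((Q - 1) * r ^ (Q - 1 - 1)) r :=
      Real.hasDerivAt_rpow_const (Or.inl hr0.ne')
    have h1 : HasDerivAt (fun s : ℝ => s ^ (Q - 1) * V s * deriv f s) _ r :=
      (hrpow.mul hVD).mul hf'D
    have hP : HasDerivAt (fun s : ℝ => s ^ (Q - 1) * V s * deriv f s)
        (-(r ^ (Q - 1) * W r * f r)) r := by
      convert h1 using 1
      rw [← h1.deriv]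
      linarith [hODE r hr]
    have hu : HasDerivAt u _ r :=
      (hP.mul ((hdD r).pow 2)).div (hfD r hr) hfr.ne'
    convert hu using 1
    rw [hgS r hr]
    have h2 : f r ≠ 0 := hfr.ne'
    simp only [Pi.mul_apply, Pi.pow_apply]
    field_simp
    ring
  -- u is differentiable everywhere
  have hU : ∀ x : ℝ, HasDerivAt u (deriv u x) x := by
    intro x
    by_cases hx : x ∈ S
    · exact ((key x hx).differentiableAt).hasDerivAt
    · have hxK : x ∉ K := fun h => hx (hKS h)
      have h1 : u =ᶠ[nhds x] fun _ => (0 : ℝ) := by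
        filter_upwards [hKc.isOpen_compl.mem_nhds hxK] with y hy
        exact hu0 y hy
      have h0 : HasDerivAt u 0 x :=
        (hasDerivAt_const x (0 : ℝ)).congr_of_eventuallyEq h1
      rwa [h0.deriv]
  have hderiv0 : ∀ x ∉ K, deriv u x = 0 := by
    intro x hx
    have h1 : u =ᶠ[nhds x] fun _ => (0 : ℝ) := by
      filter_upwards [hKc.isOpen_compl.mem_nhds hx] with y hy
      exact hu0 y hy
    rw [h1.deriv_eq, deriv_const]
  -- continuity facts
  have hrpowC : ContinuousOn (fun r : ℝ => r ^ (Q - 1)) S :=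
    fun r hr => (Real.continuousAt_rpow_const r (Q - 1)
      (Or.inl (hpos r hr).ne')).continuousWithinAt
  have hdC : Continuous d := hd.continuous
  have hd'C : Continuous (deriv d) := hd.continuous_deriv (by simp)
  have hACont : ContinuousOn (fun r => V r * (deriv d r) ^ 2 * r ^ (Q - 1)) S :=
    (hV.continuousOn.mul ((hd'C.pow 2).continuousOn)).mul hrpowC
  have hBCont : ContinuousOn (fun r => W r * (d r) ^ 2 * r ^ (Q - 1)) S :=
    (hW.continuousOn.mul ((hdC.pow 2).continuousOn)).mul hrpowC
  have hfC : ContinuousOn f S := hf.continuousOn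
  have hf'C : ContinuousOn (deriv f) S := hf1.continuousOn
  have hCCont : ContinuousOn
      (fun r => V r * (f r) ^ 2 * (deriv (fun s : ℝ => d s / f s) r) ^ 2
        * r ^ (Q - 1)) S := by
    have h1 : ContinuousOn (fun r => V r * (f r) ^ 2
        * ((deriv d r * f r - d r * deriv f r) / (f r) ^ 2) ^ 2 * r ^ (Q - 1)) S :=
      ((hV.continuousOn.mul (hfC.pow 2)).mul
        ((((hd'C.continuousOn.mul hfC).sub
          (hdC.continuousOn.mul hf'C)).div (hfC.pow 2)
          (fun r hr => pow_ne_zero 2 (hfpos r hr).ne')).pow 2)).mul hrpowC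
    exact h1.congr (fun r hr => by rw [hgS r hr])
  have hu'Cont : ContinuousOn (deriv u) S :=
    ((hACont.sub hBCont).sub hCCont).congr (fun r hr => (key r hr).deriv)
  -- integrability helper
  have hint : ∀ (h : ℝ → ℝ) (T : Set ℝ), MeasurableSet T → ContinuousOn h K →
      (∀ x ∈ T \ K, h x = 0) → IntegrableOn h T := by
    intro h T hT hcont h0
    have h1 : IntegrableOn h (T ∩ K) :=
      (hcont.integrableOn_compact hK).mono_set inter_subset_right
    have h2 : IntegrableOn h (T \ K) := by
      exact IntegrableOn.congr_fun integrableOn_zero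
        (fun x hx => (h0 x hx).symm) (hT.diff hKc.measurableSet)
    have := h1.union h2
    rwa [Set.inter_union_diff] at this
  have hSmeas : MeasurableSet S := hSopen.measurableSet
  have hIA : IntegrableOn (fun r => V r * (deriv d r) ^ 2 * r ^ (Q - 1)) S :=
    hint _ S hSmeas (hACont.mono hKS)
      (fun x hx => by simp [hd0' x hx.2])
  have hIB : IntegrableOn (fun r => W r * (d r) ^ 2 * r ^ (Q - 1)) S :=
    hint _ S hSmeas (hBCont.mono hKS)
      (fun x hx => by simp [hd0 x hx.2])
  have hIC : IntegrableOn
      (fun r => V r * (f r) ^ 2 * (deriv (fun s : ℝ => d s / f s) r) ^ 2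
        * r ^ (Q - 1)) S :=
    hint _ S hSmeas (hCCont.mono hKS)
      (fun x hx => by simp [hg0 x hx.2])
  -- the integral of deriv u over S vanishes
  obtain ⟨M, hM⟩ := hK.isBounded.subset_closedBall 0
  set b : ℝ := |M| + 1 with hb_def
  have hbK : ∀ x ∈ K, -b < x ∧ x < b := by
    intro x hx
    have := hM hx
    rw [Metric.mem_closedBall, Real.dist_eq, sub_zero] at this
    have h1 : |x| ≤ |M| := this.trans (le_abs_self M)
    constructor
    · have := (abs_le.1 h1).1; simp only [hb_def]; linarith
    · have := (abs_le.1 h1).2; simp only [hb_def]; linarith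
  have hab : (-b : ℝ) ≤ b := by
    have : (0:ℝ) ≤ |M| := abs_nonneg M
    simp only [hb_def]; linarith
  have hnotK : ∀ x : ℝ, x ∉ Set.Ioc (-b) b → x ∉ K := by
    intro x hx hxK
    exact hx ⟨(hbK x hxK).1, le_of_lt (hbK x hxK).2⟩
  have hIu : IntegrableOn (deriv u) (Set.Ioc (-b) b) :=
    hint _ _ measurableSet_Ioc (hu'Cont.mono hKS)
      (fun x hx => hderiv0 x hx.2)
  have hzero : ∫ r in S, deriv u r = 0 := by
    have e1 : ∫ r in S, deriv u r = ∫ r : ℝ, deriv u r :=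
      setIntegral_eq_integral_of_forall_compl_eq_zero
        (fun x hx => hderiv0 x (fun h => hx (hKS h)))
    have e2 : ∫ r : ℝ, deriv u r = ∫ r in Set.Ioc (-b) b, deriv u r :=
      (setIntegral_eq_integral_of_forall_compl_eq_zero
        (fun x hx => hderiv0 x (hnotK x hx))).symm
    have e3 : ∫ r in Set.Ioc (-b) b, deriv u r = ∫ r in (-b)..b, deriv u r :=
      (intervalIntegral.integral_of_le hab).symm
    have e4 : ∫ r in (-b)..b, deriv u r = u b - u (-b) := by
      apply intervalIntegral.integral_deriv_eq_sub
      · intro x _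
        exact (hU x).differentiableAt
      · exact (intervalIntegrable_iff_integrableOn_Ioc_of_le hab).2 hIu
    have hbnK : b ∉ K := by
      intro h
      exact absurd (hbK b h).2 (lt_irrefl b)
    have hbnK' : -b ∉ K := by
      intro h
      exact absurd (hbK (-b) h).1 (lt_irrefl (-b))
    rw [e1, e2, e3, e4, hu0 b hbnK, hu0 (-b) hbnK', sub_zero]
  -- putting things together
  have hEq : ∫ r in S,
      (V r * (deriv d r) ^ 2 * r ^ (Q - 1)
        - W r * (d r) ^ 2 * r ^ (Q - 1)
        - V r * (f r) ^ 2 * (deriv (fun s : ℝ => d s / f s) r) ^ 2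
            * r ^ (Q - 1)) = 0 := by
    rw [← hzero]
    apply setIntegral_congr_fun hSmeas
    intro r hr
    exact ((key r hr).deriv).symm
  have hIAB : IntegrableOn (fun r => V r * (deriv d r) ^ 2 * r ^ (Q - 1)
      - W r * (d r) ^ 2 * r ^ (Q - 1)) S := hIA.sub hIB
  rw [integral_sub hIAB hIC, integral_sub hIA hIB] at hEq
  linarith
end
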